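/- A linear subspace X of C([0,ω₁]) is separable if and only if there exists a countable ordinal σ such that every f ∈ X satisfies f(α) = f(ω₁) for all ordinals α with σ < α ≤ ω₁ (equivalently, X is contained in the range of the projection P̃σ). -/

import Mathlib

set_option synthInstance.maxHeartbeats 1000000
set_option maxHeartbeats 2000000

noncomputable section
open Set Ordinal

/-- `ω₁`, the first uncountable ordinal. -/
abbrev omega1 : Ordinal.{0} := Ordinal.omega 1

/-- Every ordinal interval `[0, o]` is a compact space in its (inherited) order topology. -/
instance (o : Ordinal) : CompactSpace (Set.Iic o) := by
  have h : IsCompact (Set.Iic o) := by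
    have := isCompact_Icc (a := (⊥ : Ordinal)) (b := o)
    rwa [Set.Icc_bot] at this
  exact isCompact_iff_compactSpace.mp h

/-- The Banach space `C([0, ω₁])` of continuous real-valued functions on `[0, ω₁]`,
with the supremum norm. -/
abbrev CC := C(Set.Iic omega1, ℝ)

/-- The interval `{α ∈ [0, o] : α ≤ σ}` is clopen. -/
theorem isClopen_le (o σ : Ordinal) : IsClopen {α : Set.Iic o | (α : Ordinal) ≤ σ} := by
  constructor
  · exact isClosed_Iic.preimage continuous_subtype_val
  · have : {α : Set.Iic o | (α : Ordinal) ≤ σ}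
        = (Subtype.val) ⁻¹' (Set.Iio (Order.succ σ)) := by
      ext α; simp [Order.lt_succ_iff]
    rw [this]
    exact isOpen_Iio.preimage continuous_subtype_val

/-- The continuous retraction of `[0, ω₁]` fixing `[0, σ]` and sending `(σ, ω₁]` to `ω₁`. -/
def retr (σ : Ordinal) : C(Set.Iic omega1, Set.Iic omega1) :=
  letI : ∀ j : Set.Iic omega1, Decidable (j ∈ {α : Set.Iic omega1 | (α : Ordinal) ≤ σ}) :=
    fun _ => Classical.dec _
  ⟨({α : Set.Iic omega1 | (α : Ordinal) ≤ σ}).piecewise id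
      (fun _ => ⟨omega1, Set.self_mem_Iic⟩),
    Continuous.piecewise
      (fun a ha => by
        rw [(isClopen_le omega1 σ).frontier_eq] at ha
        exact absurd ha (Set.notMem_empty a))
      continuous_id continuous_const⟩

/-- The projection `P̃σ` on `C([0, ω₁])`: `(P̃σ f)(α) = f α` for `α ≤ σ`
and `(P̃σ f)(α) = f ω₁` for `σ < α ≤ ω₁`. -/
def Ptilde (σ : Ordinal) : CC →L[ℝ] CC :=
  LinearMap.mkContinuous
    { toFun := fun f => f.comp (retr σ)
      map_add' := fun f g => by ext x; simp
      map_smul' := fun c f => by ext x; simp }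
    1
    (fun f => by
      rw [one_mul]
      exact (ContinuousMap.norm_le _ (norm_nonneg f)).mpr
        fun x => ContinuousMap.norm_coe_le_norm f _)

/-!
A continuous function on `[0, ω₁]` is constant on a tail `(σ, ω₁]` with `σ` countable: the
countably many neighbourhoods `f⁻¹ (ball (f ω₁) (1/(n+1)))` of `ω₁` contain a common tail because
`ω₁` has uncountable cofinality. Taking the supremum over a countable dense subset of `X` gives
one `σ` for all of `X`, since being constant on `(σ, ω₁]` is a closed condition. Conversely, `P̃σ`
factors through `C([0, σ + 1])`, which is separable because `[0, σ + 1]` is a countable compact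
order-topological space.
-/

open Filter Topology

lemma countable_Iic_of_lt_omega1 {o : Ordinal} (h : o < omega1) : (Iic o).Countable := by
  rw [← Order.Iio_succ, ← Cardinal.le_aleph0_iff_set_countable, Cardinal.mk_Iio_ordinal,
    Cardinal.lift_le_aleph0, ← Cardinal.lt_aleph_one_iff, ← Cardinal.lt_ord, Cardinal.ord_aleph]
  exact (Cardinal.isSuccLimit_omega 1).succ_lt h

lemma exists_forall_gt_mem_of_mem_nhds_top {U : ℕ → Set (Iic omega1)} (hU : ∀ n, U n ∈ 𝓝 ⊤) :
    ∃ b < omega1, ∀ α : Iic omega1, b < (α : Ordinal) → ∀ n, α ∈ U n := by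
  have hbasis : (𝓝 (⊤ : Iic omega1)).HasBasis (· < omega1)
      (fun b => ((↑) : Iic omega1 → Ordinal) ⁻¹' Ioc b omega1) := by
    rw [nhds_subtype_eq_comap]
    exact (SuccOrder.hasBasis_nhds_Ioc_of_exists_lt ⟨0, Ordinal.omega_pos 1⟩).comap _
  choose b hb hbU using fun n => hbasis.mem_iff.mp (hU n)
  exact ⟨⨆ n, b n, Ordinal.iSup_lt_omega_one hb, fun α hα n =>
    hbU n ⟨(Ordinal.le_iSup b n).trans_lt hα, α.2⟩⟩

lemma retr_apply_of_le {σ : Ordinal} {α : Iic omega1} (h : (α : Ordinal) ≤ σ) :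
    retr σ α = α := by
  simp only [retr, ContinuousMap.coe_mk]
  exact piecewise_eq_of_mem _ _ _ h

lemma retr_apply_of_lt {σ : Ordinal} {α : Iic omega1} (h : σ < (α : Ordinal)) :
    retr σ α = ⊤ := by
  simp only [retr, ContinuousMap.coe_mk]
  exact piecewise_eq_of_notMem _ _ _ (not_le.mpr h)

def IsConstAbove (σ : Ordinal) (f : CC) : Prop :=
  ∀ α : Iic omega1, σ < (α : Ordinal) → f α = f ⊤

lemma IsConstAbove.mono {σ τ : Ordinal} {f : CC} (hf : IsConstAbove σ f) (h : σ ≤ τ) :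
    IsConstAbove τ f :=
  fun α hα => hf α (h.trans_lt hα)

lemma isClosed_setOf_isConstAbove (σ : Ordinal) : IsClosed {f : CC | IsConstAbove σ f} := by
  simp only [IsConstAbove, ofPred_forall]
  exact isClosed_iInter fun α => isClosed_iInter fun _ =>
    isClosed_eq (continuous_eval_const α) (continuous_eval_const ⊤)

lemma IsConstAbove.Ptilde_eq {σ : Ordinal} {f : CC} (hf : IsConstAbove σ f) : Ptilde σ f = f := by
  ext α
  change f (retr σ α) = f α
  rcases le_or_gt (α : Ordinal) σ with h | h
  · rw [retr_apply_of_le h]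
  · rw [retr_apply_of_lt h, hf α h]

lemma exists_isConstAbove (f : CC) : ∃ σ < omega1, IsConstAbove σ f := by
  have hU (n : ℕ) : f ⁻¹' Metric.ball (f ⊤) (1 / (n + 1)) ∈ 𝓝 ⊤ :=
    f.continuous.continuousAt (Metric.ball_mem_nhds _ Nat.one_div_pos_of_nat)
  obtain ⟨σ, hσ, hball⟩ := exists_forall_gt_mem_of_mem_nhds_top hU
  refine ⟨σ, hσ, fun α hα => by_contra fun hne => ?_⟩
  obtain ⟨n, hn⟩ := exists_nat_one_div_lt (dist_pos.mpr hne)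
  exact (hball α hα n).not_ge hn.le

lemma exists_isConstAbove_of_countable {s : Set CC} (hs : s.Countable) :
    ∃ σ < omega1, ∀ f ∈ s, IsConstAbove σ f := by
  have := hs.to_subtype
  choose σ hσ hfσ using fun f : s => exists_isConstAbove f
  exact ⟨⨆ f, σ f, Ordinal.iSup_lt_omega_one hσ, fun f hf =>
    (hfσ ⟨f, hf⟩).mono (Ordinal.le_iSup σ ⟨f, hf⟩)⟩

lemma isSeparable_range_Ptilde {σ : Ordinal} (hσ : σ < omega1) :
    TopologicalSpace.IsSeparable (range (Ptilde σ)) := by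
  set τ := Order.succ σ
  have hτ : τ < omega1 := (Cardinal.isSuccLimit_omega 1).succ_lt hσ
  have : Countable (Iic τ) := (countable_Iic_of_lt_omega1 hτ).to_subtype
  let clamp : C(Iic omega1, Iic τ) :=
    ⟨fun α => projIic τ α, (continuous_const.min continuous_subtype_val).subtype_mk _⟩
  let incl : C(Iic τ, Iic omega1) :=
    ⟨fun β => ⟨β, β.2.trans hτ.le⟩, continuous_subtype_val.subtype_mk _⟩
  have hretr (α : Iic omega1) : retr σ (incl (clamp α)) = retr σ α := by
    rcases le_or_gt (α : Ordinal) σ with h | h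
    · have hα : ((incl (clamp α) : Iic omega1) : Ordinal) = α :=
        min_eq_right (h.trans (Order.le_succ σ))
      rw [retr_apply_of_le h, retr_apply_of_le (hα ▸ h), Subtype.ext hα]
    · have : σ < ((incl (clamp α) : Iic omega1) : Ordinal) :=
        lt_min (Order.lt_succ σ) h
      rw [retr_apply_of_lt h, retr_apply_of_lt this]
  refine (TopologicalSpace.isSeparable_range (ContinuousMap.continuous_precomp clamp)).mono ?_
  rintro _ ⟨f, rfl⟩
  exact ⟨f.comp ((retr σ).comp incl), ContinuousMap.ext fun α => congrArg f (hretr α)⟩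

/-- A linear subspace `X` of `C([0,ω₁])` is separable if and only if there is a countable
ordinal `σ` such that every `f ∈ X` is constantly `f(ω₁)` on `(σ, ω₁]`; equivalently, `X` is
contained in the range of the projection `P̃σ`. -/
theorem subspace_separable_iff (X : Submodule ℝ CC) :
    TopologicalSpace.IsSeparable (X : Set CC) ↔
      ∃ σ < omega1,
        (∀ f ∈ X, ∀ α : Set.Iic omega1, σ < (α : Ordinal) →
          f α = f ⟨omega1, Set.self_mem_Iic⟩) ∧
        (X : Set CC) ⊆ Set.range (Ptilde σ) := by
  constructor
  · rintro ⟨c, hc, hXc⟩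
    obtain ⟨σ, hσ, hcσ⟩ := exists_isConstAbove_of_countable hc
    have hXσ : ∀ f ∈ X, IsConstAbove σ f := fun f hf =>
      closure_minimal hcσ (isClosed_setOf_isConstAbove σ) (hXc hf)
    exact ⟨σ, hσ, hXσ, fun f hf => ⟨f, (hXσ f hf).Ptilde_eq⟩⟩
  · rintro ⟨σ, hσ, -, hXσ⟩
    exact (isSeparable_range_Ptilde hσ).mono hXσ
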